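/- Let $a$, $b$, $c$ be nonzero integers and let $p$ be an odd prime. Then the equation $a x^2 + b y^2 + c^2 z^2 = 1$ has a solution $(x,y,z) \in \mathbb{Z}_p^3$ if and only if $p \nmid \gcd(a,b,c)$ and the following two conditions hold: (i) if $p \mid \gcd(a,c)$ then $b$ is a quadratic residue modulo $p$; (ii) if $p \mid \gcd(b,c)$ then $a$ is a quadratic residue modulo $p$. -/

import Mathlib

/-!
Reduction modulo `p` turns a `p`-adic solution into a solution over `𝔽_p`. Conversely, in a
solution over `𝔽_p` some term `a X²` is nonzero; lifting the other variables arbitrarily and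
solving `a x² = 1 - (rest)` by Hensel's lemma (the derivative `2 a x` is a unit as `p` is odd)
gives a `p`-adic solution. Over `𝔽_p`, the term `c² z²` represents `1` as soon as `c ≠ 0`;
otherwise `A X² + B Y² = 1` is solvable by pigeonhole when `A B ≠ 0`, and when one coefficient
vanishes exactly if the other is a square.
-/

open Polynomial

theorem isSquare_of_mul_sq_eq_one {M : Type*} [CommMonoid M] {b y : M} (h : b * y ^ 2 = 1) :
    IsSquare b :=
  ⟨b * y, calc
    b = b * (b * y ^ 2) := by rw [h, mul_one]
    _ = b * y * (b * y) := by rw [sq]; ac_rfl⟩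

theorem ZMod.isSquare_intCast_iff_exists_dvd {n : ℕ} (b : ℤ) :
    IsSquare (b : ZMod n) ↔ ∃ t : ℤ, (n : ℤ) ∣ t ^ 2 - b := by
  simp_rw [← ZMod.intCast_zmod_eq_zero_iff_dvd, Int.cast_sub, Int.cast_pow, sub_eq_zero]
  constructor
  · rintro ⟨r, hr⟩
    exact ⟨r.cast, by rw [ZMod.intCast_cast, ZMod.cast_id', id, hr, sq]⟩
  · rintro ⟨t, ht⟩
    exact ⟨t, by rw [← ht, sq]⟩

namespace FiniteField

variable {F : Type*} [Field F] [Fintype F]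

theorem exists_mul_sq_add_mul_sq_eq_one_iff (hF : Fintype.card F % 2 = 1) (A B : F) :
    (∃ X Y : F, A * X ^ 2 + B * Y ^ 2 = 1) ↔
      ¬(A = 0 ∧ B = 0) ∧ (A = 0 → IsSquare B) ∧ (B = 0 → IsSquare A) := by
  constructor
  · rintro ⟨X, Y, h⟩
    refine ⟨fun ⟨hA, hB⟩ => by simp [hA, hB] at h, fun hA => ?_, fun hB => ?_⟩
    · exact isSquare_of_mul_sq_eq_one (y := Y) (by simpa [hA] using h)
    · exact isSquare_of_mul_sq_eq_one (y := X) (by simpa [hB] using h)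
  · rintro ⟨hAB, hsqB, hsqA⟩
    by_cases hA : A = 0
    · obtain ⟨t, rfl⟩ := hsqB hA
      have ht : t ≠ 0 := by rintro rfl; simp_all
      exact ⟨0, t⁻¹, by field_simp; simp⟩
    by_cases hB : B = 0
    · obtain ⟨t, rfl⟩ := hsqA hB
      have ht : t ≠ 0 := by rintro rfl; simp_all
      exact ⟨t⁻¹, 0, by field_simp; simp⟩
    have hf : (C A * X ^ 2).degree = 2 := by compute_degree!
    have hg : (C B * X ^ 2 - C 1).degree = 2 := by compute_degree!
    obtain ⟨X, Y, h⟩ := exists_root_sum_quadratic hf hg hF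
    simp only [eval_sub, eval_mul, eval_pow, eval_C, eval_X] at h
    exact ⟨X, Y, by linear_combination h⟩

theorem exists_mul_sq_add_mul_sq_add_sq_mul_sq_eq_one_iff (hF : Fintype.card F % 2 = 1)
    (A B C : F) :
    (∃ X Y Z : F, A * X ^ 2 + B * Y ^ 2 + C ^ 2 * Z ^ 2 = 1) ↔
      ¬(A = 0 ∧ B = 0 ∧ C = 0) ∧ (A = 0 ∧ C = 0 → IsSquare B) ∧
        (B = 0 ∧ C = 0 → IsSquare A) := by
  by_cases hC : C = 0
  · simpa [hC] using exists_mul_sq_add_mul_sq_eq_one_iff hF A B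
  · simp only [hC, and_false, not_false_eq_true, false_implies, and_self, iff_true]
    exact ⟨0, 0, C⁻¹, by field_simp; simp⟩

end FiniteField

namespace PadicInt

variable {p : ℕ} [Fact p.Prime]

theorem norm_lt_one_iff_toZMod_eq_zero (x : ℤ_[p]) : ‖x‖ < 1 ↔ toZMod x = 0 := by
  rw [← RingHom.mem_ker, ker_toZMod, IsLocalRing.mem_maximalIdeal, mem_nonunits]

theorem norm_eq_one_iff_toZMod_ne_zero (x : ℤ_[p]) : ‖x‖ = 1 ↔ toZMod x ≠ 0 := by
  rw [ne_eq, ← norm_lt_one_iff_toZMod_eq_zero, not_lt]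
  exact ⟨ge_of_eq, (norm_le_one x).antisymm⟩

theorem exists_aeval_eq_zero_of_toZMod {R : Type*} [CommSemiring R] [Algebra R ℤ_[p]]
    {F : R[X]} {s : ℤ_[p]} (h : toZMod (F.aeval s) = 0)
    (h' : toZMod (F.derivative.aeval s) ≠ 0) : ∃ x : ℤ_[p], F.aeval x = 0 := by
  have hnorm : ‖F.aeval s‖ < ‖F.derivative.aeval s‖ ^ 2 := by
    rwa [(norm_eq_one_iff_toZMod_ne_zero _).mpr h', one_pow, norm_lt_one_iff_toZMod_eq_zero]
  obtain ⟨x, hx, -⟩ := hensels_lemma hnorm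
  exact ⟨x, hx⟩

theorem exists_mul_sq_eq_of_toZMod (hp : p ≠ 2) {u r s : ℤ_[p]}
    (h : toZMod (u * s ^ 2) = toZMod r) (hr : toZMod r ≠ 0) : ∃ x : ℤ_[p], u * x ^ 2 = r := by
  have hus : toZMod u * toZMod s ≠ 0 := fun hus =>
    hr (by rw [← h, map_mul, map_pow, sq, ← mul_assoc, hus, zero_mul])
  have h2 : (2 : ZMod p) ≠ 0 := Ring.two_ne_zero (by rwa [ZMod.ringChar_zmod_n])
  obtain ⟨x, hx⟩ := exists_aeval_eq_zero_of_toZMod (F := C u * X ^ 2 - C r) (s := s)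
    (by simp [h]) (by simpa [one_add_one_eq_two, map_ofNat, h2] using hus)
  exact ⟨x, by simpa [sub_eq_zero] using hx⟩

theorem exists_sum_mul_sq_eq_one_of_toZMod {ι : Type*} [Fintype ι] (hp : p ≠ 2)
    (a : ι → ℤ_[p]) (X : ι → ZMod p) (h : ∑ i, toZMod (a i) * X i ^ 2 = 1) :
    ∃ x : ι → ℤ_[p], ∑ i, a i * x i ^ 2 = 1 := by
  classical
  obtain ⟨i, -, hi⟩ := Finset.exists_ne_zero_of_sum_ne_zero (h ▸ one_ne_zero)
  choose x₀ hx₀ using fun j => ZMod.ringHom_surjective toZMod (X j)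
  set r := 1 - ∑ j ∈ Finset.univ.erase i, a j * x₀ j ^ 2
  have hr : toZMod r = toZMod (a i) * X i ^ 2 := by
    simp only [r, map_sub, map_one, map_sum, map_mul, map_pow, hx₀]
    rw [← h, ← Finset.add_sum_erase _ _ (Finset.mem_univ i), add_sub_cancel_right]
  obtain ⟨y, hy⟩ := exists_mul_sq_eq_of_toZMod hp (u := a i) (s := x₀ i)
    (by rw [hr, map_mul, map_pow, hx₀]) (hr ▸ hi)
  refine ⟨Function.update x₀ i y, ?_⟩
  rw [← Finset.add_sum_erase _ _ (Finset.mem_univ i), Function.update_self, hy,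
    Finset.sum_congr rfl fun j hj => by rw [Function.update_of_ne (Finset.ne_of_mem_erase hj)],
    sub_add_cancel]

end PadicInt

theorem stmt9_general (a b c : ℤ)
    (p : ℕ) [Fact p.Prime] (hp2 : p ≠ 2) :
    (∃ x y z : ℤ_[p],
        (a : ℤ_[p]) * x ^ 2 + (b : ℤ_[p]) * y ^ 2 + (c : ℤ_[p]) ^ 2 * z ^ 2 = 1) ↔
      (¬((p : ℤ) ∣ a ∧ (p : ℤ) ∣ b ∧ (p : ℤ) ∣ c) ∧
        (((p : ℤ) ∣ a ∧ (p : ℤ) ∣ c) → ∃ t : ℤ, (p : ℤ) ∣ t ^ 2 - b) ∧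
        (((p : ℤ) ∣ b ∧ (p : ℤ) ∣ c) → ∃ t : ℤ, (p : ℤ) ∣ t ^ 2 - a)) := by
  have hcard : Fintype.card (ZMod p) % 2 = 1 := by
    rw [ZMod.card, ← Nat.odd_iff]
    exact (Fact.out : p.Prime).odd_of_ne_two hp2
  have hreduce : (∃ x y z : ℤ_[p],
        (a : ℤ_[p]) * x ^ 2 + (b : ℤ_[p]) * y ^ 2 + (c : ℤ_[p]) ^ 2 * z ^ 2 = 1) ↔
      ∃ X Y Z : ZMod p,
        (a : ZMod p) * X ^ 2 + (b : ZMod p) * Y ^ 2 + (c : ZMod p) ^ 2 * Z ^ 2 = 1 := by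
    constructor
    · rintro ⟨x, y, z, h⟩
      exact ⟨PadicInt.toZMod x, PadicInt.toZMod y, PadicInt.toZMod z,
        by simpa using congrArg PadicInt.toZMod h⟩
    · rintro ⟨X, Y, Z, h⟩
      obtain ⟨x, hx⟩ := PadicInt.exists_sum_mul_sq_eq_one_of_toZMod hp2
        ![(a : ℤ_[p]), b, c ^ 2] ![X, Y, Z]
        (by simpa [Fin.sum_univ_three] using h)
      exact ⟨x 0, x 1, x 2, by simpa [Fin.sum_univ_three] using hx⟩
  simp_rw [hreduce, FiniteField.exists_mul_sq_add_mul_sq_add_sq_mul_sq_eq_one_iff hcard,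
    ← ZMod.isSquare_intCast_iff_exists_dvd, ZMod.intCast_zmod_eq_zero_iff_dvd]

/-- For nonzero integers `a`, `b`, `c` and an odd prime `p`, the equation
`a x² + b y² + c² z² = 1` is soluble over `ℤ_p` iff `p ∤ gcd(a,b,c)` and:
(i) if `p ∣ gcd(a,c)` then `b` is a quadratic residue mod `p`;
(ii) if `p ∣ gcd(b,c)` then `a` is a quadratic residue mod `p`. -/
theorem stmt9 (a b c : ℤ) (ha : a ≠ 0) (hb : b ≠ 0) (hc : c ≠ 0)
    (p : ℕ) [Fact p.Prime] (hp2 : p ≠ 2) :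
    (∃ x y z : ℤ_[p],
        (a : ℤ_[p]) * x ^ 2 + (b : ℤ_[p]) * y ^ 2 + (c : ℤ_[p]) ^ 2 * z ^ 2 = 1) ↔
      (¬((p : ℤ) ∣ a ∧ (p : ℤ) ∣ b ∧ (p : ℤ) ∣ c) ∧
        (((p : ℤ) ∣ a ∧ (p : ℤ) ∣ c) → ∃ t : ℤ, (p : ℤ) ∣ t ^ 2 - b) ∧
        (((p : ℤ) ∣ b ∧ (p : ℤ) ∣ c) → ∃ t : ℤ, (p : ℤ) ∣ t ^ 2 - a)) :=
  stmt9_general a b c p hp2
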